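/- For 0<q<1, the q-Mittag-Leffler series _{q}E_α(λ, t) = ∑_{k=0}^∞ λ^k t^{αk}/Γ_q(αk+1) with z_0 = 0 converges absolutely for all t with |λ| |t|^α (1−q)^α < 1, where Γ_q is the q-gamma function and α > 0. -/
import Mathlib


noncomputable def qGamma (q x : ℝ) : ℝ :=
  (1 - q) ^ (1 - x) * ∏' n : ℕ, (1 - q ^ (n + 1)) / (1 - q ^ ((n : ℝ) + x))

lemma qML_summable_logS (q : ℝ) (hq0 : 0 < q) (hq1 : q < 1) :
    Summable fun n : ℕ => -Real.log (1 - q ^ (n + 1)) := by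
  have hfac : ∀ n : ℕ, 0 < 1 - q ^ (n + 1) := by
    intro n
    have : q ^ (n + 1) < 1 := pow_lt_one₀ hq0.le hq1 (Nat.succ_ne_zero n)
    linarith
  apply Summable.of_nonneg_of_le (f := fun n : ℕ => q ^ (n + 1) / (1 - q))
  · intro n
    rw [neg_nonneg]
    exact Real.log_nonpos (hfac n).le (by nlinarith [pow_pos hq0 (n + 1)])
  · intro n
    have h1 : Real.log (1 - q ^ (n + 1)) = -Real.log (1 / (1 - q ^ (n + 1))) := by
      rw [Real.log_div one_ne_zero (hfac n).ne', Real.log_one]; ring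
    rw [h1, neg_neg]
    have h2 : Real.log (1 / (1 - q ^ (n + 1))) ≤ 1 / (1 - q ^ (n + 1)) - 1 :=
      Real.log_le_sub_one_of_pos (one_div_pos.mpr (hfac n))
    have h3 : 1 / (1 - q ^ (n + 1)) - 1 = q ^ (n + 1) / (1 - q ^ (n + 1)) := by
      rw [div_sub_one (hfac n).ne', sub_sub_cancel]
    have h4 : q ^ (n + 1) / (1 - q ^ (n + 1)) ≤ q ^ (n + 1) / (1 - q) := by
      apply div_le_div_of_nonneg_left (by positivity) (by linarith)
      have : q ^ (n + 1) ≤ q := by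
        calc q ^ (n + 1) ≤ q ^ 1 := pow_le_pow_of_le_one hq0.le hq1.le (by omega)
        _ = q := pow_one q
      linarith
    linarith
  · exact ((summable_geometric_of_lt_one hq0.le hq1).mul_left (q / (1 - q))).congr
      (fun n => by rw [pow_succ]; ring)

lemma qML_prod_lb (q x : ℝ) (hq0 : 0 < q) (hq1 : q < 1) (hx : 1 ≤ x) :
    min (Real.exp (-(∑' n : ℕ, -Real.log (1 - q ^ (n + 1))))) 1 ≤
      ∏' n : ℕ, (1 - q ^ (n + 1)) / (1 - q ^ ((n : ℝ) + x)) := by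
  set S : ℝ := ∑' n : ℕ, -Real.log (1 - q ^ (n + 1)) with hS
  have hfac : ∀ n : ℕ, 0 < 1 - q ^ (n + 1) := by
    intro n
    have : q ^ (n + 1) < 1 := pow_lt_one₀ hq0.le hq1 (Nat.succ_ne_zero n)
    linarith
  have hden : ∀ n : ℕ, 0 < 1 - q ^ ((n : ℝ) + x) ∧ 1 - q ^ ((n : ℝ) + x) ≤ 1 := by
    intro n
    have hpos : (0:ℝ) < q ^ ((n : ℝ) + x) := Real.rpow_pos_of_pos hq0 _
    have hlt : q ^ ((n : ℝ) + x) < 1 := by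
      apply Real.rpow_lt_one hq0.le hq1
      have : (0:ℝ) ≤ (n : ℝ) := Nat.cast_nonneg n
      linarith
    constructor <;> linarith
  have key : ∀ s : Finset ℕ,
      Real.exp (-S) ≤ ∏ n ∈ s, (1 - q ^ (n + 1)) / (1 - q ^ ((n : ℝ) + x)) := by
    intro s
    have step1 : Real.exp (-S) ≤ ∏ n ∈ s, (1 - q ^ (n + 1)) := by
      have : ∏ n ∈ s, (1 - q ^ (n + 1)) =
          Real.exp (∑ n ∈ s, Real.log (1 - q ^ (n + 1))) := by
        rw [Real.exp_sum]
        exact Finset.prod_congr rfl fun n _ => (Real.exp_log (hfac n)).symm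
      rw [this, Real.exp_le_exp]
      have hsum : ∑ n ∈ s, -Real.log (1 - q ^ (n + 1)) ≤ S :=
        Summable.sum_le_tsum s
          (fun n _ => by
            rw [neg_nonneg]
            exact Real.log_nonpos (hfac n).le (by nlinarith [pow_pos hq0 (n + 1)]))
          (qML_summable_logS q hq0 hq1)
      have : -∑ n ∈ s, Real.log (1 - q ^ (n + 1)) ≤ S := by
        rw [← Finset.sum_neg_distrib]; exact hsum
      linarith
    refine step1.trans (Finset.prod_le_prod (fun n _ => (hfac n).le) (fun n _ => ?_))
    rw [le_div_iff₀ (hden n).1]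
    nlinarith [(hden n).2, (hfac n).le]
  by_cases hm : Multipliable fun n : ℕ => (1 - q ^ (n + 1)) / (1 - q ^ ((n : ℝ) + x))
  · exact le_trans (min_le_left _ _) (ge_of_tendsto' hm.hasProd key)
  · rw [tprod_eq_one_of_not_multipliable hm]
    exact min_le_right _ _

theorem qML_summable (q α lam t : ℝ) (hq0 : 0 < q) (hq1 : q < 1) (hα : 0 < α)
    (h : |lam| * |t| ^ α * (1 - q) ^ α < 1) :
    Summable fun k : ℕ => lam ^ k * t ^ (α * (k : ℝ)) / qGamma q (α * (k : ℝ) + 1) := by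
  set c : ℝ := min (Real.exp (-(∑' n : ℕ, -Real.log (1 - q ^ (n + 1))))) 1 with hc
  have hcpos : 0 < c := lt_min (Real.exp_pos _) one_pos
  have hq1' : (0:ℝ) < 1 - q := by linarith
  set r : ℝ := |lam| * |t| ^ α * (1 - q) ^ α with hr
  have hr0 : 0 ≤ r := by positivity
  -- lower bound on qGamma
  have hΓ : ∀ k : ℕ, (1 - q) ^ (-(α * (k : ℝ))) * c ≤ qGamma q (α * (k : ℝ) + 1) := by
    intro k
    have hx : (1:ℝ) ≤ α * (k : ℝ) + 1 := by nlinarith [mul_nonneg hα.le (Nat.cast_nonneg k : (0:ℝ) ≤ (k:ℝ))]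
    have := qML_prod_lb q (α * (k : ℝ) + 1) hq0 hq1 hx
    have hpow : (0:ℝ) < (1 - q) ^ (1 - (α * (k : ℝ) + 1)) := Real.rpow_pos_of_pos hq1' _
    have h2 : (1 - q) ^ (1 - (α * (k : ℝ) + 1)) * c ≤ qGamma q (α * (k : ℝ) + 1) := by
      unfold qGamma
      exact mul_le_mul_of_nonneg_left this hpow.le
    have : (1:ℝ) - (α * (k : ℝ) + 1) = -(α * (k : ℝ)) := by ring
    rwa [this] at h2
  have hΓpos : ∀ k : ℕ, 0 < qGamma q (α * (k : ℝ) + 1) := by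
    intro k
    exact lt_of_lt_of_le (by positivity) (hΓ k)
  -- comparison with geometric series
  apply Summable.of_abs
  apply Summable.of_nonneg_of_le (f := fun k : ℕ => c⁻¹ * r ^ k)
    (fun k => abs_nonneg _)
  · intro k
    rw [abs_div, abs_of_pos (hΓpos k), abs_mul, abs_pow]
    have hbound : |t ^ (α * (k : ℝ))| ≤ |t| ^ (α * (k : ℝ)) := Real.abs_rpow_le_abs_rpow _ _
    have hnum : |lam| ^ k * |t ^ (α * (k : ℝ))| ≤ |lam| ^ k * |t| ^ (α * (k : ℝ)) :=
      mul_le_mul_of_nonneg_left hbound (by positivity)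
    have h1 : |lam| ^ k * |t ^ (α * (k : ℝ))| / qGamma q (α * (k : ℝ) + 1) ≤
        |lam| ^ k * |t| ^ (α * (k : ℝ)) / ((1 - q) ^ (-(α * (k : ℝ))) * c) := by
      apply div_le_div₀ (by positivity) hnum (by positivity) (hΓ k)
    refine h1.trans (le_of_eq ?_)
    have hexp : ((1 - q) ^ (-(α * (k : ℝ))))⁻¹ = (1 - q) ^ (α * (k : ℝ)) := by
      rw [← Real.rpow_neg hq1'.le, neg_neg]
    have htk : |t| ^ (α * (k : ℝ)) = (|t| ^ α) ^ k := by
      rw [← Real.rpow_natCast (|t| ^ α) k, ← Real.rpow_mul (abs_nonneg t)]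
    have hqk : (1 - q) ^ (α * (k : ℝ)) = ((1 - q) ^ α) ^ k := by
      rw [← Real.rpow_natCast ((1 - q) ^ α) k, ← Real.rpow_mul hq1'.le]
    rw [div_eq_mul_inv, mul_inv, hexp, hr, mul_pow, mul_pow, htk, hqk]
    ring
  · exact (summable_geometric_of_lt_one hr0 h).mul_left _
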